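/- Let N ∈ ℕ, C > 0, A ≥ 1, and let u : ℝ^d → ℝ^κ and χ : ℝ^κ → ℝ be N-times continuously differentiable functions such that ‖D^n χ(x)‖ ≤ C·A^n for all x ∈ ℝ^κ and all 0 ≤ n ≤ N, and ‖D^n u(η)‖ ≤ C·A^{-n} for all η ∈ ℝ^d and all 1 ≤ n ≤ N. Then there exists a constant C' > 0, depending only on N, C, d, κ (and not on A), such that ‖D^n (χ ∘ u)(η)‖ ≤ C' for all η ∈ ℝ^d and all 0 ≤ n ≤ N. -/

import Mathlib

/-!
Faà di Bruno bounds the `n`-th derivative of `g ∘ f` by `n! · C_g · D^n` when `‖D^i g‖ ≤ C_g` and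
`‖D^i f‖ ≤ D^i`. Taking `C_g = C·A^n` and `D = M/A` with `M = max C 1`, the powers of `A` cancel,
leaving `n! · C · M^n`, which is independent of `A`.
-/

open Nat

variable {𝕜 : Type*} [NontriviallyNormedField 𝕜]
  {E : Type*} [NormedAddCommGroup E] [NormedSpace 𝕜 E]
  {F : Type*} [NormedAddCommGroup F] [NormedSpace 𝕜 F]
  {G : Type*} [NormedAddCommGroup G] [NormedSpace 𝕜 G]

theorem norm_iteratedFDeriv_comp_le_of_scaled {g : F → G} {f : E → F} {n : ℕ}
    (hg : ContDiff 𝕜 n g) (hf : ContDiff 𝕜 n f) (x : E) {C M A : ℝ} (hA : 1 ≤ A)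
    (hgC : ∀ i, i ≤ n → ‖iteratedFDeriv 𝕜 i g (f x)‖ ≤ C * A ^ i)
    (hfM : ∀ i, 1 ≤ i → i ≤ n → ‖iteratedFDeriv 𝕜 i f x‖ ≤ (M / A) ^ i) :
    ‖iteratedFDeriv 𝕜 n (g ∘ f) x‖ ≤ n ! * C * M ^ n := by
  have hC : 0 ≤ C := by simpa using (norm_nonneg _).trans (hgC 0 (Nat.zero_le n))
  have hgCn : ∀ i, i ≤ n → ‖iteratedFDeriv 𝕜 i g (f x)‖ ≤ C * A ^ n := fun i hi =>
    (hgC i hi).trans (by gcongr)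
  calc ‖iteratedFDeriv 𝕜 n (g ∘ f) x‖
      ≤ n ! * (C * A ^ n) * (M / A) ^ n :=
        norm_iteratedFDeriv_comp_le hg hf le_rfl x hgCn hfM
    _ = n ! * C * M ^ n := by
        have : A ≠ 0 := by positivity
        rw [div_pow]
        field_simp

theorem mul_zpow_neg_le_max_one_div_pow (C : ℝ) {A : ℝ} (hA : 0 < A) {i : ℕ} (hi : 1 ≤ i) :
    C * A ^ (-(i : ℤ)) ≤ (max C 1 / A) ^ i := by
  have hCM : C ≤ max C 1 ^ i := (le_max_left C 1).trans (le_self_pow₀ (le_max_right C 1) (by omega))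
  calc C * A ^ (-(i : ℤ)) ≤ max C 1 ^ i * A ^ (-(i : ℤ)) := by gcongr
    _ = (max C 1 / A) ^ i := by rw [zpow_neg, zpow_natCast, div_pow, div_eq_mul_inv]

/-- **The cutoff lemma.**
If `‖D^n χ‖ ≤ C·A^n` for `0 ≤ n ≤ N` and `‖D^n u‖ ≤ C·A^{-n}` for `1 ≤ n ≤ N`,
then all derivatives of order `≤ N` of the composition `χ ∘ u` are bounded by a
constant `C'` depending only on `N, C, d, κ` (and not on `A`). -/
theorem stmt_5 (d κ N : ℕ) (C : ℝ) (hC : 0 < C) :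
    ∃ C' > 0, ∀ A : ℝ, 1 ≤ A →
      ∀ u : EuclideanSpace ℝ (Fin d) → EuclideanSpace ℝ (Fin κ),
      ∀ χ : EuclideanSpace ℝ (Fin κ) → ℝ,
      ContDiff ℝ N u → ContDiff ℝ N χ →
      (∀ x : EuclideanSpace ℝ (Fin κ), ∀ n : ℕ, n ≤ N →
        ‖iteratedFDeriv ℝ n χ x‖ ≤ C * A ^ n) →
      (∀ η : EuclideanSpace ℝ (Fin d), ∀ n : ℕ, 1 ≤ n → n ≤ N →
        ‖iteratedFDeriv ℝ n u η‖ ≤ C * A ^ (-(n : ℤ))) →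
      ∀ η : EuclideanSpace ℝ (Fin d), ∀ n : ℕ, n ≤ N →
        ‖iteratedFDeriv ℝ n (χ ∘ u) η‖ ≤ C' := by
  refine ⟨N ! * C * max C 1 ^ N, by positivity, ?_⟩
  intro A hA u χ hu hχ hχC huC η n hn
  have hnN : (n : WithTop ℕ∞) ≤ N := by exact_mod_cast hn
  calc ‖iteratedFDeriv ℝ n (χ ∘ u) η‖ ≤ n ! * C * max C 1 ^ n :=
        norm_iteratedFDeriv_comp_le_of_scaled (hχ.of_le hnN) (hu.of_le hnN) η hA
          (fun i hi => hχC _ i (hi.trans hn))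
          (fun i hi₁ hi₂ => (huC η i hi₁ (hi₂.trans hn)).trans
            (mul_zpow_neg_le_max_one_div_pow C (by linarith) hi₁))
    _ ≤ N ! * C * max C 1 ^ N := by
        gcongr
        exact le_max_right C 1
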